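/- arXiv:2002.05129 — 4 statements merged into one kernel-verified Lean document; each statement's English description precedes it below -/
import Mathlib

section
/- Let G be a finite simple graph whose vertex set carries a linear order, and let L be the set of vertices of degree exactly 1 (leaves). Define the raked set D as the set of leaves v such that, letting u be the unique neighbor of v, either u is not a leaf, or v < u in the linear order. Then |D| ≥ |L|/2. -/
/-! A leaf that is not raked is adjacent to a smaller leaf, and that smaller leaf is raked because
its only neighbour is larger. As a leaf has only one neighbour, adjacency matches the unraked
leaves injectively into the raked ones, so at most half of the leaves are unraked. -/

namespace SimpleGraph

variable {V : Type*} {G : SimpleGraph V}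

lemma eq_of_adj_of_degree_eq_one {u v w : V} [Fintype (G.neighborSet u)]
    (hu : G.degree u = 1) (hv : G.Adj u v) (hw : G.Adj u w) : v = w :=
  (degree_eq_one_iff_existsUnique_adj.mp hu).unique hv hw

variable [Fintype V] [DecidableRel G.Adj] [LinearOrder V]

lemma exists_adj_degree_eq_one_lt_of_not_forall {v : V}
    (h : ¬ ∀ u ∈ G.neighborFinset v, G.degree u ≠ 1 ∨ v < u) :
    ∃ u, G.Adj v u ∧ G.degree u = 1 ∧ u < v := by
  push Not at h
  obtain ⟨u, hu, hdeg, hle⟩ := h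
  have hvu : G.Adj v u := (mem_neighborFinset G v u).mp hu
  exact ⟨u, hvu, hdeg, hle.lt_of_ne (G.ne_of_adj hvu).symm⟩

lemma forall_neighbor_degree_ne_one_or_lt_of_adj_lt {u v : V} (hu : G.degree u = 1)
    (huv : G.Adj u v) (hlt : u < v) :
    ∀ w ∈ G.neighborFinset u, G.degree w ≠ 1 ∨ u < w := by
  intro w hw
  rw [eq_of_adj_of_degree_eq_one hu ((mem_neighborFinset G u w).mp hw) huv]
  exact Or.inr hlt

end SimpleGraph

open SimpleGraph in
theorem stmt_2 {V : Type*} [Fintype V] [LinearOrder V] (G : SimpleGraph V)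
    [DecidableRel G.Adj] :
    (Finset.univ.filter (fun v => G.degree v = 1)).card ≤
      2 * (Finset.univ.filter
        (fun v => G.degree v = 1 ∧
          ∀ u ∈ G.neighborFinset v, G.degree u ≠ 1 ∨ v < u)).card := by
  rw [← Finset.filter_filter]
  set L := Finset.univ.filter (fun v => G.degree v = 1) with hL
  set raked := fun v => ∀ u ∈ G.neighborFinset v, G.degree u ≠ 1 ∨ v < u
  change L.card ≤ 2 * (L.filter raked).card
  have hsplit := Finset.card_filter_add_card_filter_not (s := L) raked
  have hunraked_le : (L.filter (¬ raked ·)).card ≤ (L.filter raked).card := by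
    refine Finset.card_le_card_of_forall_subsingleton G.Adj ?_ ?_
    · intro v hv
      obtain ⟨u, hvu, hu, hlt⟩ :=
        exists_adj_degree_eq_one_lt_of_not_forall (Finset.mem_filter.mp hv).2
      refine ⟨u, Finset.mem_filter.mpr ⟨by simp [hL, hu], ?_⟩, hvu⟩
      exact forall_neighbor_degree_ne_one_or_lt_of_adj_lt hu hvu.symm hlt
    · intro u hu v hv w hw
      have hu1 : G.degree u = 1 := by simpa [hL] using (Finset.mem_filter.mp hu).1
      exact eq_of_adj_of_degree_eq_one hu1 hv.2.symm hw.2.symm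
  omega
end

section
/- Let F be a finite acyclic simple graph (a forest) on a linearly ordered vertex set V of size n. Let the coin flips c : V → Bool be drawn uniformly at random from all such functions (equivalently, independent fair coins, one per vertex). Define the deleted set D(c) to consist of: (i) every isolated vertex (degree 0); (ii) every leaf v (degree 1) such that, letting u be the unique neighbor of v, either u is not a leaf or v < u; and (iii) every vertex v of degree exactly 2 such that both neighbors of v have degree at least 2, c(v) = true, and c(u) = false for both neighbors u of v. Then the expected size of D(c) is at least n/8. -/
/-!
Swap the sum over coin vectors and vertices. An isolated vertex or a raked leaf is deleted for
all `2 ^ n` coin vectors, and a compress candidate (a degree-2 vertex whose neighbours have degree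
at least 2) for the `2 ^ (n - 3)` vectors with prescribed coins on it and its two neighbours. So it
suffices that `n ≤ A + 6 B + C`, where `A`, `B`, `C` count the isolated vertices, the raked leaves
and the compress candidates.

A forest with `A` isolated vertices has at most `n - A` edges, so by the handshake lemma it has at
least as many leaves as vertices of degree at least 3. A degree-2 vertex that is not a candidate is
adjacent to a leaf, and a leaf that is not raked is adjacent to a raked leaf; both assignments are
injective because a leaf has a single neighbour. With `L` the number of leaves this gives
`n ≤ A + 2 L + (C + L)` and `L ≤ 2 B`.
-/

open Finset

theorem card_filter_forall_mem_eq_mul_pow {α β : Type*} [Fintype α] [DecidableEq α] [Fintype β]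
    [DecidableEq β] (S : Finset α) (f : α → β) :
    #{c : α → β | ∀ a ∈ S, c a = f a} * Fintype.card β ^ #S =
      Fintype.card β ^ Fintype.card α := by
  have hpi : ({c | ∀ a ∈ S, c a = f a} : Finset (α → β)) =
      Fintype.piFinset fun a => if a ∈ S then {f a} else univ := by
    ext c
    simp only [mem_filter, mem_univ, true_and, Fintype.mem_piFinset]
    refine forall_congr' fun a => ?_
    split_ifs <;> simp [*]
  rw [hpi, Fintype.card_piFinset]
  simp only [apply_ite card, card_singleton, card_univ, prod_ite, prod_const_one, one_mul,
    prod_const]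
  rw [← pow_add]
  congr 1
  rw [filter_notMem_eq_sdiff, ← compl_eq_univ_sdiff, card_compl_add_card]

namespace SimpleGraph

variable {V : Type*} [Fintype V] {G : SimpleGraph V} [DecidableRel G.Adj]

theorem IsAcyclic.card_edgeFinset_le (hG : G.IsAcyclic) : #G.edgeFinset ≤ Fintype.card V := by
  cases isEmpty_or_nonempty V
  · simp [Subsingleton.elim G ⊥]
  obtain ⟨T, hGT, -, hT⟩ := connected_top.exists_isTree_le_of_le_of_isAcyclic le_top hG
  classical
  calc #G.edgeFinset ≤ #T.edgeFinset := card_le_card (edgeFinset_mono hGT)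
    _ ≤ Fintype.card V := by rw [← hT.card_edgeFinset]; omega

theorem IsAcyclic.card_edgeFinset_add_card_degree_eq_zero_le (hG : G.IsAcyclic) :
    #G.edgeFinset + #{v | G.degree v = 0} ≤ Fintype.card V := by
  have hsupp : #G.edgeFinset ≤ Fintype.card G.support := by
    rw [← card_edgeFinset_induce_support]
    exact (hG.induce _).card_edgeFinset_le
  have hsplit : #{v | v ∈ G.support} + #{v | G.degree v = 0} = Fintype.card V := by
    simp only [degree_eq_zero_iff_notMem_support]
    exact card_filter_add_card_filter_not _
  rw [Fintype.card_subtype] at hsupp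
  omega

theorem IsAcyclic.card_three_le_degree_le_card_degree_eq_one (hG : G.IsAcyclic) :
    #{v | 3 ≤ G.degree v} ≤ #{v | G.degree v = 1} := by
  have hforest := hG.card_edgeFinset_add_card_degree_eq_zero_le
  have hpointwise : ∀ v, 2 + (if 3 ≤ G.degree v then 1 else 0) ≤
      G.degree v + 2 * (if G.degree v = 0 then 1 else 0) + (if G.degree v = 1 then 1 else 0) := by
    intro v
    split_ifs <;> omega
  have hsum := sum_le_sum fun v (_ : v ∈ univ) => hpointwise v
  simp only [sum_add_distrib, ← mul_sum, ← card_filter, sum_degrees_eq_twice_card_edges,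
    sum_const, card_univ, smul_eq_mul] at hsum
  omega

theorem eq_of_adj_of_adj_of_degree_eq_one {u v w : V} (hu : G.degree u = 1) (hv : G.Adj u v)
    (hw : G.Adj u w) : v = w :=
  (degree_eq_one_iff_existsUnique_adj.mp hu).unique hv hw

theorem card_le_card_of_forall_exists_adj_degree_eq_one {s t : Finset V}
    (h : ∀ v ∈ s, ∃ u ∈ t, G.Adj v u ∧ G.degree u = 1) : #s ≤ #t := by
  choose! f hft hadj hdeg using h
  refine card_le_card_of_injOn f hft fun v hv w hw hvw => ?_
  exact eq_of_adj_of_adj_of_degree_eq_one (hdeg v hv) (hadj v hv).symm (hvw ▸ (hadj w hw).symm)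

variable (G)

def IsCompressCandidate (v : V) : Prop :=
  G.degree v = 2 ∧ ∀ u ∈ G.neighborFinset v, 2 ≤ G.degree u

instance : DecidablePred G.IsCompressCandidate := fun _ => inferInstanceAs (Decidable (_ ∧ _))

theorem card_degree_eq_two_le_card_isCompressCandidate_add :
    #{v | G.degree v = 2} ≤ #{v | G.IsCompressCandidate v} + #{v | G.degree v = 1} := by
  rw [← card_filter_add_card_filter_not (s := ({v | G.degree v = 2} : Finset V))
    G.IsCompressCandidate]
  refine add_le_add (card_le_card (monotone_filter_left _ (subset_univ _))) ?_
  refine card_le_card_of_forall_exists_adj_degree_eq_one (G := G) fun v hv => ?_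
  simp only [mem_filter, mem_univ, true_and, IsCompressCandidate, not_and, not_forall,
    not_le] at hv ⊢
  obtain ⟨u, hu, hlt⟩ := hv.2 hv.1
  have hadj : G.Adj v u := (mem_neighborFinset _ _ _).mp hu
  have hpos : 0 < G.degree u := (G.degree_pos_iff_exists_adj u).mpr ⟨v, hadj.symm⟩
  exact ⟨u, by omega, hadj, by omega⟩

theorem two_pow_card_le_eight_mul_card_filter_of_degree_eq_two [DecidableEq V] {v : V}
    (hv : G.degree v = 2) :
    2 ^ Fintype.card V ≤
      8 * #{c : V → Bool | c v = true ∧ ∀ u ∈ G.neighborFinset v, c u = false} := by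
  set S := insert v (G.neighborFinset v)
  have hS : #S = 3 := by
    rw [card_insert_of_notMem (G.notMem_neighborFinset_self v), card_neighborFinset_eq_degree, hv]
  have hcount := card_filter_forall_mem_eq_mul_pow S fun u => decide (u = v)
  have hsub : ({c : V → Bool | ∀ u ∈ S, c u = decide (u = v)} : Finset _) ⊆
      ({c : V → Bool | c v = true ∧ ∀ u ∈ G.neighborFinset v, c u = false} : Finset _) := by
    intro c hc
    simp only [S, mem_filter_univ, forall_mem_insert, decide_true] at hc ⊢
    refine ⟨hc.1, fun u hu => ?_⟩
    simpa [(G.ne_of_adj ((G.mem_neighborFinset v u).mp hu)).symm] using hc.2 u hu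
  rw [hS, Fintype.card_bool] at hcount
  have := card_le_card hsub
  omega

section LinearOrder

variable [LinearOrder V]

def IsRakedLeaf (v : V) : Prop :=
  G.degree v = 1 ∧ ∀ u ∈ G.neighborFinset v, G.degree u ≠ 1 ∨ v < u

instance : DecidablePred G.IsRakedLeaf := fun _ => inferInstanceAs (Decidable (_ ∧ _))

theorem card_degree_eq_one_le_two_mul_card_isRakedLeaf :
    #{v | G.degree v = 1} ≤ 2 * #{v | G.IsRakedLeaf v} := by
  rw [two_mul, ← card_filter_add_card_filter_not (s := ({v | G.degree v = 1} : Finset V))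
    G.IsRakedLeaf]
  refine add_le_add (card_le_card (monotone_filter_left _ (subset_univ _))) ?_
  refine card_le_card_of_forall_exists_adj_degree_eq_one (G := G) fun v hv => ?_
  simp only [mem_filter, mem_univ, true_and, IsRakedLeaf, not_and, not_forall, not_or,
    not_not, not_lt] at hv
  obtain ⟨u, hu, hdeg, hle⟩ := hv.2 hv.1
  have hadj : G.Adj v u := (mem_neighborFinset _ _ _).mp hu
  refine ⟨u, mem_filter.mpr ⟨mem_univ _, hdeg, fun w hw => Or.inr ?_⟩, hadj, hdeg⟩
  rw [eq_of_adj_of_adj_of_degree_eq_one hdeg ((mem_neighborFinset _ _ _).mp hw) hadj.symm]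
  exact lt_of_le_of_ne hle hadj.ne'

theorem IsAcyclic.card_le_card_degree_eq_zero_add_six_mul_card_isRakedLeaf_add
    (hG : G.IsAcyclic) :
    Fintype.card V ≤
      #{v | G.degree v = 0} + 6 * #{v | G.IsRakedLeaf v} + #{v | G.IsCompressCandidate v} := by
  have hpartition : ∀ v, 1 ≤ (if G.degree v = 0 then 1 else 0) +
      (if G.degree v = 1 then 1 else 0) + (if G.degree v = 2 then 1 else 0) +
      (if 3 ≤ G.degree v then 1 else 0) := by
    intro v
    split_ifs <;> omega
  have hsum := sum_le_sum fun v (_ : v ∈ univ) => hpartition v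
  simp only [sum_add_distrib, ← card_filter, sum_const, card_univ, smul_eq_mul, mul_one] at hsum
  have := hG.card_three_le_degree_le_card_degree_eq_one
  have := G.card_degree_eq_two_le_card_isCompressCandidate_add
  have := G.card_degree_eq_one_le_two_mul_card_isRakedLeaf
  omega

def IsDeleted (c : V → Bool) (v : V) : Prop :=
  G.degree v = 0 ∨ G.IsRakedLeaf v ∨
    (G.IsCompressCandidate v ∧ c v = true ∧ ∀ u ∈ G.neighborFinset v, c u = false)

instance (c : V → Bool) : DecidablePred (G.IsDeleted c) :=
  fun _ => inferInstanceAs (Decidable (_ ∨ _))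

theorem two_pow_card_mul_le_eight_mul_card_isDeleted (v : V) :
    2 ^ Fintype.card V * (8 * (if G.degree v = 0 then 1 else 0) +
      8 * (if G.IsRakedLeaf v then 1 else 0) + (if G.IsCompressCandidate v then 1 else 0)) ≤
      8 * #{c : V → Bool | G.IsDeleted c v} := by
  have hraked : G.IsRakedLeaf v → G.degree v = 1 := And.left
  have hcompress : G.IsCompressCandidate v → G.degree v = 2 := And.left
  by_cases halways : G.degree v = 0 ∨ G.IsRakedLeaf v
  · have hall : ∀ c ∈ univ, G.IsDeleted c v := fun _ _ =>
      halways.elim Or.inl (Or.inr ∘ Or.inl)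
    rw [filter_true_of_mem hall, card_univ, Fintype.card_fun, Fintype.card_bool,
      mul_comm 8 (2 ^ _)]
    apply Nat.mul_le_mul_left
    split_ifs <;> grind
  · rw [if_neg (not_or.mp halways).1, if_neg (not_or.mp halways).2]
    split_ifs with hcand
    · calc 2 ^ Fintype.card V * (8 * 0 + 8 * 0 + 1) = 2 ^ Fintype.card V := by ring
        _ ≤ 8 * #{c : V → Bool | c v = true ∧ ∀ u ∈ G.neighborFinset v, c u = false} :=
          G.two_pow_card_le_eight_mul_card_filter_of_degree_eq_two hcand.1
        _ ≤ _ := by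
          refine Nat.mul_le_mul_left 8 (card_le_card fun c hc => ?_)
          simp only [mem_filter, mem_univ, true_and] at hc ⊢
          exact Or.inr (Or.inr ⟨hcand, hc⟩)
    · simp

theorem IsAcyclic.card_mul_two_pow_le_eight_mul_sum_card_isDeleted (hG : G.IsAcyclic) :
    Fintype.card V * 2 ^ Fintype.card V ≤ 8 * ∑ c : V → Bool, #{v | G.IsDeleted c v} := by
  have hsum :=
    sum_le_sum fun v (_ : v ∈ univ) => G.two_pow_card_mul_le_eight_mul_card_isDeleted v
  simp only [← mul_sum, sum_add_distrib, ← card_filter] at hsum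
  calc Fintype.card V * 2 ^ Fintype.card V
      ≤ (8 * #{v | G.degree v = 0} + 8 * #{v | G.IsRakedLeaf v} +
          #{v | G.IsCompressCandidate v}) * 2 ^ Fintype.card V := by
        have := hG.card_le_card_degree_eq_zero_add_six_mul_card_isRakedLeaf_add
        gcongr
        omega
    _ ≤ _ := by
      rw [mul_comm]
      exact hsum.trans_eq (congrArg _ (sum_card_bipartiteAbove_eq_sum_card_bipartiteBelow _).symm)

end LinearOrder

end SimpleGraph

theorem stmt_4 {V : Type*} [Fintype V] [LinearOrder V] (G : SimpleGraph V)
    [DecidableRel G.Adj] (hacyc : G.IsAcyclic) :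
    (Fintype.card V : ℝ) / 8 ≤
      (∑ c : V → Bool,
        ((Finset.univ.filter (fun v =>
            G.degree v = 0 ∨
            (G.degree v = 1 ∧ ∀ u ∈ G.neighborFinset v, G.degree u ≠ 1 ∨ v < u) ∨
            (G.degree v = 2 ∧ (∀ u ∈ G.neighborFinset v, 2 ≤ G.degree u) ∧
              c v = true ∧ ∀ u ∈ G.neighborFinset v, c u = false))).card : ℝ)) /
        2 ^ Fintype.card V := by
  have key := hacyc.card_mul_two_pow_le_eight_mul_sum_card_isDeleted
  simp only [SimpleGraph.IsDeleted, SimpleGraph.IsRakedLeaf, SimpleGraph.IsCompressCandidate,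
    and_assoc] at key
  rw [div_le_div_iff₀ (by norm_num) (by positivity), mul_comm _ (8 : ℝ)]
  exact_mod_cast key
end

section
/- Let β be a real number with 0 < β < 1 and let n and k be positive real numbers. Then the infinite sum over i : ℕ of min(k, n·β^i) is at most k·(log(1 + n/k)/log(1/β) + 1) + k/(1−β), where log denotes the natural logarithm. -/
theorem stmt_12 (β n k : ℝ) (hβ0 : 0 < β) (hβ1 : β < 1) (hn : 0 < n) (hk : 0 < k) :
    ∑' i : ℕ, min k (n * β ^ i) ≤
      k * (Real.log (1 + n / k) / Real.log (1 / β) + 1) + k / (1 - β) := by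
  set f : ℕ → ℝ := fun i => min k (n * β ^ i) with hf_def
  have hβnn : (0:ℝ) ≤ β := hβ0.le
  have h1β : (0:ℝ) < 1 - β := by linarith
  have hlogβ : 0 < Real.log (1 / β) := Real.log_pos (one_lt_one_div hβ0 hβ1)
  have hg : Summable (fun i : ℕ => n * β ^ i) :=
    (summable_geometric_of_lt_one hβnn hβ1).mul_left n
  have hfle : ∀ i, f i ≤ n * β ^ i := fun i => min_le_right _ _
  have hfnn : ∀ i, 0 ≤ f i := fun i =>
    le_min hk.le (mul_nonneg hn.le (pow_nonneg hβnn i))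
  have hf : Summable f := Summable.of_nonneg_of_le hfnn hfle hg
  set L : ℝ := Real.log (n / k) / Real.log (1 / β) with hL_def
  set r : ℕ := ⌈L⌉₊ with hr_def
  -- key: n * β ^ r ≤ k
  have hkey : n * β ^ r ≤ k := by
    rcases le_or_gt n k with h | h
    · calc n * β ^ r ≤ n * 1 := by
            exact mul_le_mul_of_nonneg_left (pow_le_one₀ hβnn hβ1.le) hn.le
        _ = n := mul_one n
        _ ≤ k := h
    · have hLr : L ≤ (r : ℝ) := Nat.le_ceil L
      have h1 : Real.log (n / k) ≤ (r : ℝ) * Real.log (1 / β) := by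
        rw [hL_def] at hLr
        calc Real.log (n / k) = Real.log (n / k) / Real.log (1 / β) * Real.log (1 / β) := by
              field_simp
          _ ≤ (r : ℝ) * Real.log (1 / β) := by
              exact mul_le_mul_of_nonneg_right hLr hlogβ.le
      have h2 : Real.log (n / k) ≤ Real.log ((1 / β) ^ r) := by
        rwa [Real.log_pow]
      have hnk : (0:ℝ) < n / k := div_pos hn hk
      have h3 : n / k ≤ (1 / β) ^ r :=
        (Real.log_le_log_iff hnk (pow_pos (by positivity) r)).mp h2
      have hβr : (0:ℝ) < β ^ r := pow_pos hβ0 r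
      rw [one_div, inv_pow] at h3
      rw [le_inv_comm₀ hnk hβr] at h3
      calc n * β ^ r ≤ n * (k / n) := by
            exact mul_le_mul_of_nonneg_left (by rwa [inv_div] at h3) hn.le
        _ = k := by field_simp
  -- key: (r : ℝ) ≤ log(1+n/k)/log(1/β) + 1
  have hrle : (r : ℝ) ≤ Real.log (1 + n / k) / Real.log (1 / β) + 1 := by
    have hQnn : 0 ≤ Real.log (1 + n / k) / Real.log (1 / β) := by
      apply div_nonneg _ hlogβ.le
      apply Real.log_nonneg
      have : 0 < n / k := div_pos hn hk
      linarith
    have hLQ : L ≤ Real.log (1 + n / k) / Real.log (1 / β) := by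
      rw [hL_def]
      have hpos : 0 < n / k := div_pos hn hk
      have hlog : Real.log (n / k) ≤ Real.log (1 + n / k) :=
        Real.log_le_log hpos (by linarith)
      exact (div_le_div_iff_of_pos_right hlogβ).mpr hlog
    rcases le_or_gt L 0 with h | h
    · have : r = 0 := by
        rw [hr_def]; exact Nat.ceil_eq_zero.mpr h
      rw [this]; push_cast; linarith
    · have := Nat.ceil_lt_add_one h.le
      rw [← hr_def] at this
      linarith
  -- split the sum
  have hsplit : ∑' i, f i = (∑ i ∈ Finset.range r, f i) + ∑' i, f (i + r) :=
    (Summable.sum_add_tsum_nat_add r hf).symm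
  have hA : (∑ i ∈ Finset.range r, f i) ≤ (r : ℝ) * k := by
    calc (∑ i ∈ Finset.range r, f i) ≤ ∑ _i ∈ Finset.range r, k :=
          Finset.sum_le_sum fun i _ => min_le_left _ _
      _ = (r : ℝ) * k := by rw [Finset.sum_const, Finset.card_range]; simp [nsmul_eq_mul]
  have hB : (∑' i, f (i + r)) ≤ k / (1 - β) := by
    have h1 : ∀ i : ℕ, f (i + r) ≤ (n * β ^ r) * β ^ i := by
      intro i
      calc f (i + r) ≤ n * β ^ (i + r) := hfle _
        _ = (n * β ^ r) * β ^ i := by ring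
    have hg' : Summable (fun i : ℕ => (n * β ^ r) * β ^ i) :=
      (summable_geometric_of_lt_one hβnn hβ1).mul_left _
    calc (∑' i, f (i + r)) ≤ ∑' i : ℕ, (n * β ^ r) * β ^ i := by
          apply Summable.tsum_le_tsum h1 (hf.comp_injective (add_left_injective r)) hg'
      _ = (n * β ^ r) * (1 - β)⁻¹ := by
          rw [tsum_mul_left, tsum_geometric_of_lt_one hβnn hβ1]
      _ ≤ k * (1 - β)⁻¹ := by
          exact mul_le_mul_of_nonneg_right hkey (by positivity)
      _ = k / (1 - β) := by rw [div_eq_mul_inv]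
  calc ∑' i, f i = (∑ i ∈ Finset.range r, f i) + ∑' i, f (i + r) := hsplit
    _ ≤ (r : ℝ) * k + k / (1 - β) := add_le_add hA hB
    _ ≤ k * (Real.log (1 + n / k) / Real.log (1 / β) + 1) + k / (1 - β) := by
        have : (r : ℝ) * k ≤ k * (Real.log (1 + n / k) / Real.log (1 / β) + 1) := by
          rw [mul_comm]
          exact mul_le_mul_of_nonneg_left hrle hk.le
        linarith
end

section
/- Let m, h, k be natural numbers with k ≥ 1, let S be a finite set of natural numbers with |S| = k and x < 2^m for every x ∈ S, and suppose 2^m ≤ k · 2^h. Then the sum over j = 0, 1, ..., m of the number of distinct values of ⌊x / 2^j⌋ as x ranges over S is at most k·h + 2k. -/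
/-!
Level `j` has at most `min k 2^(m-j)` distinct quotients: at most one per element of `S`, and at
most as many as there are blocks of length `2^j` below `2^m`. Reindexing by `i = m - j`, the
levels with `2^i ≤ k` contribute a geometric sum below `2k`, while `2^m ≤ k·2^h` leaves at most
`h` levels with `2^i > k`, each contributing at most `k`.
-/

open Finset

lemma Finset.card_image_div_le {S : Finset ℕ} {n d : ℕ} (hS : ∀ x ∈ S, x < n * d) :
    (S.image (· / d)).card ≤ n := by
  calc (S.image (· / d)).card ≤ (range n).card := by
        refine card_le_card fun y hy => ?_
        obtain ⟨x, hx, rfl⟩ := mem_image.mp hy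
        exact mem_range.mpr (Nat.div_lt_of_lt_mul (by simpa [mul_comm] using hS x hx))
    _ = n := card_range n

lemma Nat.sum_filter_two_pow_le_two_mul (s : Finset ℕ) (k : ℕ) :
    ∑ i ∈ s with 2 ^ i ≤ k, 2 ^ i ≤ 2 * k := by
  rcases Nat.eq_zero_or_pos k with rfl | hk
  · simp
  have hlt : ∑ i ∈ s with 2 ^ i ≤ k, 2 ^ i < 2 ^ (Nat.log 2 k + 1) := by
    refine Nat.geomSum_lt le_rfl fun i hi => ?_
    have hik : 2 ^ i < 2 ^ (Nat.log 2 k + 1) :=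
      (mem_filter.mp hi).2.trans_lt (Nat.lt_pow_succ_log_self one_lt_two k)
    exact (Nat.pow_lt_pow_iff_right (by norm_num)).mp hik
  have hlog : 2 ^ Nat.log 2 k ≤ k := Nat.pow_log_le_self 2 hk.ne'
  rw [pow_succ] at hlt
  omega

lemma Nat.card_filter_lt_two_pow_le {m h k : ℕ} (hmk : 2 ^ m ≤ k * 2 ^ h) :
    #{i ∈ range (m + 1) | k < 2 ^ i} ≤ h := by
  have hsub : {i ∈ range (m + 1) | k < 2 ^ i} ⊆ Ico (m + 1 - h) (m + 1) := by
    intro i hi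
    obtain ⟨him, hki⟩ := mem_filter.mp hi
    have : 2 ^ m < 2 ^ (i + h) := by
      calc 2 ^ m ≤ k * 2 ^ h := hmk
        _ < 2 ^ i * 2 ^ h := Nat.mul_lt_mul_of_pos_right hki (by positivity)
        _ = 2 ^ (i + h) := (pow_add 2 i h).symm
    have := (Nat.pow_lt_pow_iff_right (by norm_num)).mp this
    rw [mem_range] at him
    rw [mem_Ico]
    omega
  calc _ ≤ #(Ico (m + 1 - h) (m + 1)) := card_le_card hsub
    _ ≤ h := by rw [Nat.card_Ico]; omega

lemma Nat.sum_range_min_two_pow_le {m h k : ℕ} (hmk : 2 ^ m ≤ k * 2 ^ h) :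
    ∑ i ∈ range (m + 1), min k (2 ^ i) ≤ k * h + 2 * k := by
  rw [← sum_filter_add_sum_filter_not (range (m + 1)) (fun i => 2 ^ i ≤ k)]
  have hsmall : ∑ i ∈ range (m + 1) with 2 ^ i ≤ k, min k (2 ^ i) ≤ 2 * k :=
    (sum_le_sum fun i _ => min_le_right _ _).trans (Nat.sum_filter_two_pow_le_two_mul _ k)
  have hlarge : ∑ i ∈ range (m + 1) with ¬2 ^ i ≤ k, min k (2 ^ i) ≤ k * h := by
    calc _ ≤ ∑ i ∈ range (m + 1) with ¬2 ^ i ≤ k, k :=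
          sum_le_sum fun i _ => min_le_left _ _
      _ = #{i ∈ range (m + 1) | k < 2 ^ i} * k := by simp only [not_le, sum_const, smul_eq_mul]
      _ ≤ h * k := Nat.mul_le_mul_right k (Nat.card_filter_lt_two_pow_le hmk)
      _ = k * h := mul_comm h k
  omega

theorem stmt_13_general (m h k : ℕ) (S : Finset ℕ) (hS : S.card = k)
    (hbound : ∀ x ∈ S, x < 2 ^ m) (hmk : 2 ^ m ≤ k * 2 ^ h) :
    ∑ j ∈ Finset.range (m + 1), (S.image (fun x => x / 2 ^ j)).card ≤
      k * h + 2 * k := by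
  have hlevel : ∀ j ∈ range (m + 1), (S.image (· / 2 ^ j)).card ≤ min k (2 ^ (m - j)) := by
    intro j hj
    refine le_min (hS ▸ card_image_le) (card_image_div_le fun x hx => ?_)
    rw [← pow_add, Nat.sub_add_cancel (Nat.lt_succ_iff.mp (mem_range.mp hj))]
    exact hbound x hx
  calc _ ≤ ∑ j ∈ range (m + 1), min k (2 ^ (m - j)) := sum_le_sum hlevel
    _ = ∑ i ∈ range (m + 1), min k (2 ^ i) := by
        simpa using sum_range_reflect (fun i => min k (2 ^ i)) (m + 1)
    _ ≤ k * h + 2 * k := Nat.sum_range_min_two_pow_le hmk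

theorem stmt_13 (m h k : ℕ) (hk : 1 ≤ k) (S : Finset ℕ) (hS : S.card = k)
    (hbound : ∀ x ∈ S, x < 2 ^ m) (hmk : 2 ^ m ≤ k * 2 ^ h) :
    ∑ j ∈ Finset.range (m + 1), (S.image (fun x => x / 2 ^ j)).card ≤
      k * h + 2 * k :=
  stmt_13_general m h k S hS hbound hmk
end
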